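/- Let α > -1/2 and ε > 0. There exists δ ∈ (0,1/2) depending only on α such that for every K ∈ ℕ₊, the function a(u) = δ c^{-1}(1-δ)^{-1} K^{1/2} for u ∈ (cδK^{-1/2}, cK^{-1/2}) and a(u) = -c^{-1} K^{1/2} for u ∈ (0, cδK^{-1/2}) (and 0 otherwise) is, up to a universal constant multiple, an H¹(ℝ₊)-atom, and satisfies ∑_{k=0}^∞ |⟨a, φ_k^α⟩| / (k+1)^{3/4-ε} ≳ K^ε, with implicit constant independent of K. Here c > 0 is the constant from the lower estimate of φ_k^α near 0. -/

import Mathlib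

open MeasureTheory Set

/-- The generalized Laguerre polynomial `L_k^α(x)`. -/
noncomputable def lag (α : ℝ) (k : ℕ) (x : ℝ) : ℝ :=
  ∑ i ∈ Finset.range (k + 1),
    (-1 : ℝ) ^ i *
      (Real.Gamma ((k : ℝ) + α + 1) /
        (Real.Gamma ((i : ℝ) + α + 1) * (Nat.factorial (k - i)) * (Nat.factorial i))) *
      x ^ i

/-- The Laguerre function of Hermite type `φ_k^α(u)`. -/
noncomputable def phi (α : ℝ) (k : ℕ) (u : ℝ) : ℝ :=
  Real.sqrt (2 * (Nat.factorial k) / Real.Gamma ((k : ℝ) + α + 1)) *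
    lag α k (u ^ 2) * u ^ (α + 1 / 2 : ℝ) * Real.exp (-u ^ 2 / 2)


/-- An `H¹(ℝ₊)`-atom: supported in (an interval ball) ∩ `[0,∞)`, with vanishing
integral and the size condition. -/
def IsH1PlusAtom1 (a : ℝ → ℝ) : Prop :=
  Measurable a ∧
    ∃ z rad : ℝ, 0 < rad ∧
      Function.support a ⊆ Metric.ball z rad ∩ Set.Ici 0 ∧
      (∫ u, a u) = 0 ∧
      ∀ u, |a u| ≤ ((volume (Metric.ball z rad ∩ Set.Ici (0 : ℝ))).toReal)⁻¹

/-- The counterexample function `a` of the paper: `a = δc⁻¹(1-δ)⁻¹√K` on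
`(cδK^{-1/2}, cK^{-1/2})`, `a = -c⁻¹√K` on `(0, cδK^{-1/2})`, and `0` otherwise. -/
noncomputable def atomFun (c δ : ℝ) (K : ℕ) (u : ℝ) : ℝ :=
  Set.indicator (Set.Ioo (c * δ * ((K : ℝ)) ^ (-(1 : ℝ) / 2)) (c * ((K : ℝ)) ^ (-(1 : ℝ) / 2)))
      (fun _ => δ * Real.sqrt K / (c * (1 - δ))) u +
    Set.indicator (Set.Ioo 0 (c * δ * ((K : ℝ)) ^ (-(1 : ℝ) / 2)))
      (fun _ => -(Real.sqrt K / c)) u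

/-! The rescaled function `twoStep δ t`, equal to `δ/((1-δ)t)` on `(δt, t)` and to `-1/t` on
`(0, δt)`, is an `H¹(ℝ₊)`-atom on `[0, t)`, and `atomFun c δ K` is the case `t = c/√K`.
For `k ≤ K` its support lies in `u ≤ c/√k`, where
`A k^{α/2} u^{α+1/2} ≤ φ_k^α(u) ≤ B k^{α/2} u^{α+1/2}`.
Once `B δ^{α+1/2} ≤ A/2`, the positive part of the atom dominates the negative one, so
`⟨a, φ_k^α⟩ ≳ k^{α/2} t^{α+1/2} ≍ K^{-1/4}` for `K/2 < k ≤ K`. Each of these `≍ K` indices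
contributes `≳ K^{-1/4} K^{-(3/4-ε)} = K^{ε-1}` to the series, which is therefore `≳ K^ε`. -/

open Filter Topology

lemma setIntegral_Ioo_rpow {a b p : ℝ} (hab : a ≤ b) (hp : -1 < p) :
    ∫ u in Ioo a b, u ^ p = (b ^ (p + 1) - a ^ (p + 1)) / (p + 1) := by
  rw [← integral_Ioc_eq_integral_Ioo, ← intervalIntegral.integral_of_le hab,
    integral_rpow (Or.inl hp)]

lemma integrableOn_Ioo_rpow (a b : ℝ) {p : ℝ} (hp : -1 < p) :
    IntegrableOn (fun u : ℝ => u ^ p) (Ioo a b) :=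
  (intervalIntegral.intervalIntegrable_rpow' hp).1.mono_set Ioo_subset_Ioc_self

lemma mul_integral_rpow_le_setIntegral {f : ℝ → ℝ} {a b p C : ℝ} (hab : a ≤ b) (hp : -1 < p)
    (hf : IntegrableOn f (Ioo a b)) (h : ∀ u ∈ Ioo a b, C * u ^ p ≤ f u) :
    C * ((b ^ (p + 1) - a ^ (p + 1)) / (p + 1)) ≤ ∫ u in Ioo a b, f u := by
  rw [← setIntegral_Ioo_rpow hab hp, ← integral_const_mul]
  exact setIntegral_mono_on ((integrableOn_Ioo_rpow a b hp).const_mul C) hf measurableSet_Ioo h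

lemma setIntegral_le_mul_integral_rpow {f : ℝ → ℝ} {a b p C : ℝ} (hab : a ≤ b) (hp : -1 < p)
    (hf : IntegrableOn f (Ioo a b)) (h : ∀ u ∈ Ioo a b, f u ≤ C * u ^ p) :
    ∫ u in Ioo a b, f u ≤ C * ((b ^ (p + 1) - a ^ (p + 1)) / (p + 1)) := by
  rw [← setIntegral_Ioo_rpow hab hp, ← integral_const_mul]
  exact setIntegral_mono_on hf ((integrableOn_Ioo_rpow a b hp).const_mul C) measurableSet_Ioo h

lemma ball_zero_inter_Ici_zero (t : ℝ) : Metric.ball 0 t ∩ Ici 0 = Ico 0 t := by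
  ext u
  simp only [Real.ball_eq_Ioo, zero_sub, zero_add, mem_inter_iff, mem_Ioo, mem_Ici, mem_Ico]
  constructor
  · rintro ⟨⟨-, hut⟩, hu⟩
    exact ⟨hu, hut⟩
  · rintro ⟨hu, hut⟩
    exact ⟨⟨by linarith, hut⟩, hu⟩

lemma rpow_le_two_rpow_abs_mul_rpow {x y : ℝ} (r : ℝ) (hy : 0 < y) (hxy : x ≤ 2 * y)
    (hyx : y ≤ 2 * x) : x ^ r ≤ 2 ^ |r| * y ^ r := by
  have hx : 0 < x := by linarith
  rcases le_or_gt 0 r with hr | hr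
  · calc x ^ r ≤ (2 * y) ^ r := Real.rpow_le_rpow hx.le hxy hr
      _ = 2 ^ |r| * y ^ r := by rw [abs_of_nonneg hr, Real.mul_rpow zero_le_two hy.le]
  · calc x ^ r ≤ (y / 2) ^ r := Real.rpow_le_rpow_of_nonpos (by positivity) (by linarith) hr.le
      _ = 2 ^ |r| * y ^ r := by
        rw [abs_of_neg hr, Real.div_rpow hy.le zero_le_two, Real.rpow_neg zero_le_two]
        ring

lemma exists_mem_Ioo_mul_rpow_lt {p : ℝ} (hp : 0 < p) (B : ℝ) {a : ℝ} (ha : 0 < a) :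
    ∃ δ ∈ Ioo (0 : ℝ) (1 / 2), B * δ ^ p < a := by
  have hlim : Tendsto (fun δ : ℝ => B * δ ^ p) (𝓝[>] 0) (𝓝 0) := by
    have := (Real.continuousAt_rpow_const 0 p (Or.inr hp.le)).tendsto.const_mul B
    rw [Real.zero_rpow hp.ne', mul_zero] at this
    exact this.mono_left nhdsWithin_le_nhds
  obtain ⟨δ, hδa, hδ⟩ :=
    ((hlim.eventually (gt_mem_nhds ha)).and (Ioo_mem_nhdsGT (by norm_num : (0 : ℝ) < 1 / 2))).exists
  exact ⟨δ, hδ, hδa⟩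

lemma ofReal_half_mul_le_tsum_ofReal {f : ℕ → ℝ} {b : ℝ} (K : ℕ) (hb : 0 ≤ b)
    (h : ∀ k, K < 2 * k → k ≤ K → b ≤ f k) :
    ENNReal.ofReal (K / 2 * b) ≤ ∑' k, ENNReal.ofReal (f k) := by
  have hcard : (K : ℝ) / 2 ≤ (Finset.Ioc (K / 2) K).card := by
    rw [Nat.card_Ioc, div_le_iff₀ two_pos]
    exact_mod_cast (by omega : K ≤ (K - K / 2) * 2)
  calc ENNReal.ofReal (K / 2 * b)
      ≤ ENNReal.ofReal ((Finset.Ioc (K / 2) K).card * b) := by gcongr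
    _ = (Finset.Ioc (K / 2) K).card • ENNReal.ofReal b := by
      rw [ENNReal.ofReal_mul (Nat.cast_nonneg _), ENNReal.ofReal_natCast, nsmul_eq_mul]
    _ ≤ ∑ k ∈ Finset.Ioc (K / 2) K, ENNReal.ofReal (f k) :=
      Finset.card_nsmul_le_sum _ _ _ fun k hk => by
        rw [Finset.mem_Ioc] at hk
        exact ENNReal.ofReal_le_ofReal (h k (by omega) hk.2)
    _ ≤ ∑' k, ENNReal.ofReal (f k) := ENNReal.sum_le_tsum _

noncomputable def twoStep (δ t u : ℝ) : ℝ :=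
  (Ioo (δ * t) t).indicator (fun _ => δ / ((1 - δ) * t)) u -
    (Ioo 0 (δ * t)).indicator (fun _ => t⁻¹) u

section twoStep

variable {δ t : ℝ}

lemma measurable_twoStep : Measurable (twoStep δ t) :=
  (measurable_const.indicator measurableSet_Ioo).sub (measurable_const.indicator measurableSet_Ioo)

lemma support_twoStep_subset (hδ0 : 0 ≤ δ) (hδ1 : δ ≤ 1) (ht : 0 ≤ t) :
    Function.support (twoStep δ t) ⊆ Ioo 0 t := by
  intro u hu
  by_contra hu_out
  refine hu ?_
  have h₁ : u ∉ Ioo (δ * t) t := fun h => hu_out ⟨(mul_nonneg hδ0 ht).trans_lt h.1, h.2⟩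
  have h₂ : u ∉ Ioo 0 (δ * t) := fun h => hu_out ⟨h.1, h.2.trans_le (mul_le_of_le_one_left ht hδ1)⟩
  simp only [twoStep, indicator_of_notMem h₁, indicator_of_notMem h₂, sub_zero]

lemma abs_twoStep_le (hδ0 : 0 ≤ δ) (hδ : δ ≤ 1 / 2) (ht : 0 ≤ t) (u : ℝ) :
    |twoStep δ t u| ≤ t⁻¹ := by
  have hδ' : 0 ≤ 1 - δ := by linarith
  have hlow : δ / ((1 - δ) * t) ≤ t⁻¹ :=
    calc δ / ((1 - δ) * t) = δ / (1 - δ) * t⁻¹ := by rw [div_mul_eq_div_div, div_eq_mul_inv _ t]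
      _ ≤ 1 * t⁻¹ := by gcongr; exact div_le_one_of_le₀ (by linarith) hδ'
      _ = t⁻¹ := one_mul _
  simp only [twoStep, indicator_apply]
  split_ifs with h₁ h₂ h₂
  · exact absurd (h₂.2.trans h₁.1) (lt_irrefl u)
  · rwa [sub_zero, abs_of_nonneg (div_nonneg hδ0 (mul_nonneg hδ' ht))]
  · rw [zero_sub, abs_neg, abs_of_nonneg (inv_nonneg.2 ht)]
  · simpa using inv_nonneg.2 ht

lemma integral_twoStep (hδ0 : 0 ≤ δ) (hδ : δ < 1) (ht : 0 < t) : ∫ u, twoStep δ t u = 0 := by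
  have hint : ∀ (a b c : ℝ), Integrable ((Ioo a b).indicator fun _ => c) :=
    fun a b c => (integrableOn_const measure_Ioo_lt_top.ne).integrable_indicator measurableSet_Ioo
  simp only [twoStep]
  rw [integral_sub (hint _ _ _) (hint _ _ _), integral_indicator_const _ measurableSet_Ioo,
    integral_indicator_const _ measurableSet_Ioo,
    Real.volume_real_Ioo_of_le (mul_le_of_le_one_left ht.le hδ.le),
    Real.volume_real_Ioo_of_le (mul_nonneg hδ0 ht.le), smul_eq_mul, smul_eq_mul]
  field_simp [(sub_pos.2 hδ).ne']
  ring

lemma isH1PlusAtom1_twoStep (hδ0 : 0 ≤ δ) (hδ : δ ≤ 1 / 2) (ht : 0 < t) :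
    IsH1PlusAtom1 (twoStep δ t) := by
  have hvol : (volume (Metric.ball 0 t ∩ Ici (0 : ℝ))).toReal = t := by
    rw [ball_zero_inter_Ici_zero, Real.volume_Ico, sub_zero, ENNReal.toReal_ofReal ht.le]
  refine ⟨measurable_twoStep, 0, t, ht, ?_, integral_twoStep hδ0 (by linarith) ht, ?_⟩
  · rw [ball_zero_inter_Ici_zero]
    exact (support_twoStep_subset hδ0 (by linarith) ht.le).trans Ioo_subset_Ico_self
  · rw [hvol]
    exact abs_twoStep_le hδ0 hδ ht.le

lemma setIntegral_Ioi_twoStep_mul {f : ℝ → ℝ} (hδ0 : 0 ≤ δ) (hδ1 : δ ≤ 1) (ht : 0 ≤ t)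
    (hf : IntegrableOn f (Ioo 0 t)) :
    ∫ u in Ioi 0, twoStep δ t u * f u =
      δ / ((1 - δ) * t) * (∫ u in Ioo (δ * t) t, f u) - t⁻¹ * ∫ u in Ioo 0 (δ * t), f u := by
  have hsub₁ : Ioo (δ * t) t ⊆ Ioo 0 t := Ioo_subset_Ioo_left (mul_nonneg hδ0 ht)
  have hsub₂ : Ioo 0 (δ * t) ⊆ Ioo 0 t := Ioo_subset_Ioo_right (mul_le_of_le_one_left ht hδ1)
  have hint : ∀ {s : Set ℝ} (a : ℝ), s ⊆ Ioo 0 t → MeasurableSet s →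
      IntegrableOn (s.indicator fun u => a * f u) (Ioi 0) := fun a hs hsm =>
    (IntegrableOn.integrable_indicator ((hf.mono_set hs).const_mul a) hsm).integrableOn
  have hinter : ∀ {s : Set ℝ}, s ⊆ Ioo 0 t → Ioi 0 ∩ s = s := fun hs =>
    inter_eq_right.2 (hs.trans Ioo_subset_Ioi_self)
  have hsplit : (fun u => twoStep δ t u * f u) = fun u =>
      (Ioo (δ * t) t).indicator (fun u => δ / ((1 - δ) * t) * f u) u -
        (Ioo 0 (δ * t)).indicator (fun u => t⁻¹ * f u) u := by
    ext u
    rw [twoStep, sub_mul, indicator_mul_left, indicator_mul_left]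
  rw [hsplit, integral_sub (hint _ hsub₁ measurableSet_Ioo) (hint _ hsub₂ measurableSet_Ioo),
    setIntegral_indicator measurableSet_Ioo, setIntegral_indicator measurableSet_Ioo,
    hinter hsub₁, hinter hsub₂, integral_const_mul, integral_const_mul]

lemma le_setIntegral_Ioi_twoStep_mul {f : ℝ → ℝ} {p L U : ℝ} (hf : Measurable f)
    (hδ0 : 0 < δ) (hδ1 : δ < 1) (ht : 0 < t) (hp : 0 ≤ p) (hL : 0 ≤ L)
    (hδU : U * δ ^ p ≤ L / 2)
    (hbound : ∀ u ∈ Ioo 0 t, L * u ^ p ≤ f u ∧ f u ≤ U * u ^ p) :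
    L * δ * t ^ p / (2 * (p + 1)) ≤ ∫ u in Ioi 0, twoStep δ t u * f u := by
  have hp1 : 0 < p + 1 := by linarith
  have hsub₁ : Ioo (δ * t) t ⊆ Ioo 0 t := Ioo_subset_Ioo_left (by positivity)
  have hδt : δ * t ≤ t := mul_le_of_le_one_left ht.le hδ1.le
  have hsub₂ : Ioo 0 (δ * t) ⊆ Ioo 0 t := Ioo_subset_Ioo_right hδt
  have hint : ∀ C : ℝ, IntegrableOn (fun u => C * u ^ p) (Ioo 0 t) :=
    fun C => (integrableOn_Ioo_rpow 0 t (by linarith)).const_mul C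
  have hfi : IntegrableOn f (Ioo 0 t) :=
    integrable_of_le_of_le hf.aestronglyMeasurable
      (ae_restrict_of_forall_mem measurableSet_Ioo fun u hu => (hbound u hu).1)
      (ae_restrict_of_forall_mem measurableSet_Ioo fun u hu => (hbound u hu).2) (hint L) (hint U)
  have hJ₁ : L * ((t ^ (p + 1) - (δ * t) ^ (p + 1)) / (p + 1)) ≤ ∫ u in Ioo (δ * t) t, f u :=
    mul_integral_rpow_le_setIntegral hδt (by linarith) (hfi.mono_set hsub₁)
      fun u hu => (hbound u (hsub₁ hu)).1
  have hJ₂ : ∫ u in Ioo 0 (δ * t), f u ≤ U * ((δ * t) ^ (p + 1) / (p + 1)) := by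
    simpa only [Real.zero_rpow hp1.ne', sub_zero] using
      setIntegral_le_mul_integral_rpow (by positivity) (by linarith) (hfi.mono_set hsub₂)
        fun u hu => (hbound u (hsub₂ hu)).2
  rw [setIntegral_Ioi_twoStep_mul hδ0.le hδ1.le ht.le hfi]
  set D := δ ^ p
  set T := t ^ p
  have hD : D ≤ 1 := Real.rpow_le_one hδ0.le hδ1.le hp
  have hpow₁ : t ^ (p + 1) = T * t := Real.rpow_add_one ht.ne' p
  have hpow₂ : (δ * t) ^ (p + 1) = D * δ * (T * t) := by
    rw [Real.rpow_add_one (by positivity), Real.mul_rpow hδ0.le ht.le]; ring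
  have hfactor : L ≤ L * (1 - D * δ) / (1 - δ) := by
    rw [le_div_iff₀ (by linarith)]
    exact mul_le_mul_of_nonneg_left (by linarith [mul_le_of_le_one_left hδ0.le hD]) hL
  calc L * δ * T / (2 * (p + 1)) = δ * T / (p + 1) * (L / 2) := by field_simp
    _ ≤ δ * T / (p + 1) * (L * (1 - D * δ) / (1 - δ) - U * D) := by gcongr; linarith
    _ = δ / ((1 - δ) * t) * (L * ((T * t - D * δ * (T * t)) / (p + 1)))
          - t⁻¹ * (U * (D * δ * (T * t) / (p + 1))) := by
        field_simp [(sub_pos.2 hδ1).ne']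
    _ ≤ _ := by
        rw [← hpow₂, ← hpow₁]
        gcongr

end twoStep

lemma atomFun_eq_twoStep (c δ : ℝ) (K : ℕ) :
    atomFun c δ K = twoStep δ (c * (K : ℝ) ^ (-(1 : ℝ) / 2)) := by
  have hK : (K : ℝ) ^ (-(1 : ℝ) / 2) = (Real.sqrt K)⁻¹ := by
    rw [neg_div, Real.rpow_neg (Nat.cast_nonneg K), ← Real.sqrt_eq_rpow]
  ext u
  rw [atomFun, twoStep, mul_right_comm c δ, mul_comm _ δ]
  simp only [indicator_apply, hK]
  split_ifs <;>
    simp only [div_eq_mul_inv, mul_inv, inv_inv, add_zero, zero_add, sub_zero, zero_sub] <;> ring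

lemma measurable_phi (α : ℝ) (k : ℕ) : Measurable (phi α k) := by
  unfold phi lag
  fun_prop

def PhiBoundedNearZero (α A B c : ℝ) : Prop :=
  ∀ k : ℕ, 1 ≤ k → ∀ u : ℝ, 0 < u → u ≤ c / Real.sqrt k →
    A * (k : ℝ) ^ (α / 2) * u ^ (α + 1 / 2 : ℝ) ≤ phi α k u ∧
      phi α k u ≤ B * (k : ℝ) ^ (α / 2) * u ^ (α + 1 / 2 : ℝ)

section pairing

variable {α A B c δ : ℝ}

lemma le_setIntegral_atomFun_mul_phi (hα : -(1 / 2 : ℝ) < α) (hA : 0 < A) (hc : 0 < c)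
    (hbound : PhiBoundedNearZero α A B c) (hδ : δ ∈ Ioo (0 : ℝ) 1)
    (hδB : B * δ ^ (α + 1 / 2) ≤ A / 2) {k K : ℕ} (hk : 1 ≤ k) (hkK : k ≤ K) :
    A * (k : ℝ) ^ (α / 2) * δ * (c * (K : ℝ) ^ (-(1 : ℝ) / 2)) ^ (α + 1 / 2) /
        (2 * (α + 1 / 2 + 1)) ≤
      ∫ u in Ioi 0, atomFun c δ K u * phi α k u := by
  have hK : (0 : ℝ) < K := by exact_mod_cast hk.trans hkK
  have ht : 0 < c * (K : ℝ) ^ (-(1 : ℝ) / 2) := by positivity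
  have htk : c * (K : ℝ) ^ (-(1 : ℝ) / 2) ≤ c / Real.sqrt k := by
    rw [neg_div, Real.rpow_neg hK.le, ← Real.sqrt_eq_rpow, ← div_eq_mul_inv]
    exact div_le_div_of_nonneg_left hc.le (Real.sqrt_pos.2 (by exact_mod_cast hk))
      (Real.sqrt_le_sqrt (by exact_mod_cast hkK))
  rw [atomFun_eq_twoStep]
  refine le_setIntegral_Ioi_twoStep_mul (measurable_phi α k) hδ.1 hδ.2 ht (by linarith)
    (by positivity) ?_ fun u hu => hbound k hk u hu.1 (hu.2.le.trans htk)
  calc B * (k : ℝ) ^ (α / 2) * δ ^ (α + 1 / 2) = (k : ℝ) ^ (α / 2) * (B * δ ^ (α + 1 / 2)) := by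
        ring
    _ ≤ (k : ℝ) ^ (α / 2) * (A / 2) := by gcongr
    _ = A * (k : ℝ) ^ (α / 2) / 2 := by ring

lemma exists_pos_mul_rpow_le_pairing_div (hα : -(1 / 2 : ℝ) < α) (hA : 0 < A) (hc : 0 < c)
    (hbound : PhiBoundedNearZero α A B c) (hδ : δ ∈ Ioo (0 : ℝ) 1)
    (hδB : B * δ ^ (α + 1 / 2) ≤ A / 2) (ε : ℝ) :
    ∃ C > 0, ∀ K k : ℕ, K < 2 * k → k ≤ K →
      C * (K : ℝ) ^ (ε - 1) ≤
        |∫ u in Ioi 0, atomFun c δ K u * phi α k u| / ((k : ℝ) + 1) ^ (3 / 4 - ε) := by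
  set p := α + 1 / 2 with hp
  set q := 3 / 4 - ε with hq
  set N := A * δ * c ^ p / (2 * (p + 1))
  have hN : 0 < N := by
    have := hδ.1
    have : 0 < p + 1 := by linarith
    positivity
  refine ⟨N / (2 ^ |α / 2| * 2 ^ |q|), by positivity, fun K k hKk hkK => ?_⟩
  have hk : (0 : ℝ) < k := by exact_mod_cast (by omega : 0 < k)
  have hK1 : (1 : ℝ) ≤ K := by exact_mod_cast (by omega : 1 ≤ K)
  have hK : (0 : ℝ) < K := by linarith
  have hKk' : (K : ℝ) < 2 * k := by exact_mod_cast hKk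
  have hkK' : (k : ℝ) ≤ K := by exact_mod_cast hkK
  have hnum : (K : ℝ) ^ (α / 2) ≤ 2 ^ |α / 2| * (k : ℝ) ^ (α / 2) :=
    rpow_le_two_rpow_abs_mul_rpow _ hk hKk'.le (by linarith)
  have hden : ((k : ℝ) + 1) ^ q ≤ 2 ^ |q| * (K : ℝ) ^ q :=
    rpow_le_two_rpow_abs_mul_rpow _ hK (by linarith) (by linarith)
  have hpair := le_setIntegral_atomFun_mul_phi hα hA hc hbound hδ hδB (by omega : 1 ≤ k) hkK
  have htp : (c * (K : ℝ) ^ (-(1 : ℝ) / 2)) ^ p = c ^ p * (K : ℝ) ^ (-(1 : ℝ) / 2 * p) := by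
    rw [Real.mul_rpow hc.le (by positivity), ← Real.rpow_mul hK.le]
  have hexp :
      (K : ℝ) ^ (ε - 1) = (K : ℝ) ^ (α / 2) * (K : ℝ) ^ (-(1 : ℝ) / 2 * p) / (K : ℝ) ^ q := by
    rw [← Real.rpow_add hK, ← Real.rpow_sub hK, hp, hq]
    ring_nf
  calc N / (2 ^ |α / 2| * 2 ^ |q|) * (K : ℝ) ^ (ε - 1)
      = N * ((K : ℝ) ^ (α / 2) / 2 ^ |α / 2|) * (K : ℝ) ^ (-(1 : ℝ) / 2 * p) /
          (2 ^ |q| * (K : ℝ) ^ q) := by rw [hexp]; ring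
    _ ≤ N * (k : ℝ) ^ (α / 2) * (K : ℝ) ^ (-(1 : ℝ) / 2 * p) / ((k : ℝ) + 1) ^ q := by
      gcongr
      rwa [div_le_iff₀' (by positivity)]
    _ = (A * (k : ℝ) ^ (α / 2) * δ * (c * (K : ℝ) ^ (-(1 : ℝ) / 2)) ^ p / (2 * (p + 1))) /
          ((k : ℝ) + 1) ^ q := by rw [htp]; ring
    _ ≤ _ := by gcongr; exact hpair.trans (le_abs_self _)

end pairing

theorem sharpness_atom_general (α : ℝ) (hα : -(1 / 2 : ℝ) < α) (ε : ℝ)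
    (A B c : ℝ) (hA : 0 < A) (hc : 0 < c)
    (hbound : ∀ k : ℕ, 1 ≤ k → ∀ u : ℝ, 0 < u → u ≤ c / Real.sqrt k →
      A * (k : ℝ) ^ (α / 2) * u ^ (α + 1 / 2 : ℝ) ≤ phi α k u ∧
        phi α k u ≤ B * (k : ℝ) ^ (α / 2) * u ^ (α + 1 / 2 : ℝ)) :
    ∃ δ : ℝ, δ ∈ Set.Ioo (0 : ℝ) (1 / 2) ∧
      ∃ m C₂ : ℝ, 0 < m ∧ 0 < C₂ ∧ ∀ K : ℕ, 0 < K →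
        IsH1PlusAtom1 (fun u => m⁻¹ * atomFun c δ K u) ∧
        ENNReal.ofReal (C₂ * (K : ℝ) ^ ε) ≤
          ∑' k : ℕ, ENNReal.ofReal
            (|∫ u in Set.Ioi (0 : ℝ), atomFun c δ K u * phi α k u| /
              ((k : ℝ) + 1) ^ (3 / 4 - ε : ℝ)) := by
  obtain ⟨δ, hδ, hδB⟩ := exists_mem_Ioo_mul_rpow_lt (by linarith : 0 < α + 1 / 2) B (half_pos hA)
  have hδ1 : δ ∈ Ioo (0 : ℝ) 1 := ⟨hδ.1, hδ.2.trans (by norm_num)⟩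
  obtain ⟨C, hC, hterm⟩ :=
    exists_pos_mul_rpow_le_pairing_div hα hA hc hbound hδ1 hδB.le ε
  refine ⟨δ, hδ, 1, C / 2, one_pos, half_pos hC, fun K hK => ⟨?_, ?_⟩⟩
  · simpa only [inv_one, one_mul, atomFun_eq_twoStep] using
      isH1PlusAtom1_twoStep hδ.1.le hδ.2.le (by positivity : 0 < c * (K : ℝ) ^ (-(1 : ℝ) / 2))
  · have hKε : C / 2 * (K : ℝ) ^ ε = K / 2 * (C * (K : ℝ) ^ (ε - 1)) := by
      rw [Real.rpow_sub_one (by positivity)]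
      field_simp
    rw [hKε]
    exact ofReal_half_mul_le_tsum_ofReal K (by positivity) (hterm K)

/-- Sharpness construction for the Laguerre system of Hermite type, `α > -1/2`:
given the two-sided bound near the origin with constants `A, B, c`, there is
`δ ∈ (0,1/2)` (depending only on `α`) such that for every `K ≥ 1` the function
`atomFun c δ K` is, up to a universal constant multiple `m`, an `H¹(ℝ₊)`-atom and
`∑_k |⟨a,φ_k^α⟩|/(k+1)^{3/4-ε} ≳ K^ε`. -/
theorem sharpness_atom (α : ℝ) (hα : -(1 / 2 : ℝ) < α) (ε : ℝ) (hε : 0 < ε)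
    (A B c : ℝ) (hA : 0 < A) (hB : 0 < B) (hc : 0 < c)
    (hbound : ∀ k : ℕ, 1 ≤ k → ∀ u : ℝ, 0 < u → u ≤ c / Real.sqrt k →
      A * (k : ℝ) ^ (α / 2) * u ^ (α + 1 / 2 : ℝ) ≤ phi α k u ∧
        phi α k u ≤ B * (k : ℝ) ^ (α / 2) * u ^ (α + 1 / 2 : ℝ)) :
    ∃ δ : ℝ, δ ∈ Set.Ioo (0 : ℝ) (1 / 2) ∧
      ∃ m C₂ : ℝ, 0 < m ∧ 0 < C₂ ∧ ∀ K : ℕ, 0 < K →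
        IsH1PlusAtom1 (fun u => m⁻¹ * atomFun c δ K u) ∧
        ENNReal.ofReal (C₂ * (K : ℝ) ^ ε) ≤
          ∑' k : ℕ, ENNReal.ofReal
            (|∫ u in Set.Ioi (0 : ℝ), atomFun c δ K u * phi α k u| /
              ((k : ℝ) + 1) ^ (3 / 4 - ε : ℝ)) :=
  sharpness_atom_general α hα ε A B c hA hc hbound
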